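/- arXiv:2004.13269 — 2 statements merged into one kernel-verified Lean document; each statement's English description precedes it below -/
import Mathlib

section
/- Let |φ⟩ = Σ_{i=1}^{d1} Σ_{j=1}^{d2} Σ_{k=1}^{d3} a_{ijk}|ijk⟩ be a unit vector in ℂ^{d1}⊗ℂ^{d2}⊗ℂ^{d3}. Then C_3²(|φ⟩) = (1/2) Σ_{i,p=1}^{d1} Σ_{j,q=1}^{d2} Σ_{k,t=1}^{d3} ( |a_{ijk}a_{pqt} − a_{ijt}a_{pqk}|² + |a_{ijk}a_{pqt} − a_{iqk}a_{pjt}|² + |a_{ijk}a_{pqt} − a_{pjk}a_{iqt}|² ). -/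
/-! Each of the three summands is a sum of squared 2×2 minors `|b_xu b_yv − b_xv b_yu|²` of the
coefficient matrix `b` of `φ` for one bipartition ({1,2}|{3}, {1,3}|{2}, {1}|{2,3}).
Expanding, the products of norms give `2‖φ‖⁴` and the cross terms give the two purities
`tr ρ_A²`, `tr ρ_B²` of that bipartition. The three bipartitions use each of the six reduced
states exactly once, so the whole sum is `6 − Σ_α tr ρ_α² = 2 C₃²`. -/

open scoped BigOperators

namespace Stmt5

/-- The (unnormalized) projector `|v⟩⟨v|` associated to a vector `v`. -/
noncomputable def outer {I : Type*} (v : I → ℂ) : Matrix I I ℂ :=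
  Matrix.of fun x y => v x * (starRingEnd ℂ) (v y)

variable {d1 d2 d3 : ℕ}

/-- `tr(ρ_α²)` for `α = {1}`. -/
noncomputable def tr1sq (ρ : Matrix (Fin d1 × Fin d2 × Fin d3) (Fin d1 × Fin d2 × Fin d3) ℂ) : ℂ :=
  ∑ i, ∑ p, (∑ j, ∑ k, ρ (i, j, k) (p, j, k)) * (∑ j, ∑ k, ρ (p, j, k) (i, j, k))

/-- `tr(ρ_α²)` for `α = {2}`. -/
noncomputable def tr2sq (ρ : Matrix (Fin d1 × Fin d2 × Fin d3) (Fin d1 × Fin d2 × Fin d3) ℂ) : ℂ :=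
  ∑ j, ∑ q, (∑ i, ∑ k, ρ (i, j, k) (i, q, k)) * (∑ i, ∑ k, ρ (i, q, k) (i, j, k))

/-- `tr(ρ_α²)` for `α = {3}`. -/
noncomputable def tr3sq (ρ : Matrix (Fin d1 × Fin d2 × Fin d3) (Fin d1 × Fin d2 × Fin d3) ℂ) : ℂ :=
  ∑ k, ∑ t, (∑ i, ∑ j, ρ (i, j, k) (i, j, t)) * (∑ i, ∑ j, ρ (i, j, t) (i, j, k))

/-- `tr(ρ_α²)` for `α = {1,2}`. -/
noncomputable def tr12sq (ρ : Matrix (Fin d1 × Fin d2 × Fin d3) (Fin d1 × Fin d2 × Fin d3) ℂ) : ℂ :=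
  ∑ i, ∑ p, ∑ j, ∑ q, (∑ k, ρ (i, j, k) (p, q, k)) * (∑ k, ρ (p, q, k) (i, j, k))

/-- `tr(ρ_α²)` for `α = {1,3}`. -/
noncomputable def tr13sq (ρ : Matrix (Fin d1 × Fin d2 × Fin d3) (Fin d1 × Fin d2 × Fin d3) ℂ) : ℂ :=
  ∑ i, ∑ p, ∑ k, ∑ t, (∑ j, ρ (i, j, k) (p, j, t)) * (∑ j, ρ (p, j, t) (i, j, k))

/-- `tr(ρ_α²)` for `α = {2,3}`. -/
noncomputable def tr23sq (ρ : Matrix (Fin d1 × Fin d2 × Fin d3) (Fin d1 × Fin d2 × Fin d3) ℂ) : ℂ :=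
  ∑ j, ∑ q, ∑ k, ∑ t, (∑ i, ρ (i, j, k) (i, q, t)) * (∑ i, ρ (i, q, t) (i, j, k))

/-- Tripartite pure-state concurrence
`C₃(|φ⟩) = 2^{1−3/2} √((2³−2) − Σ_α tr(ρ_α²))`, where `α` runs over the six
nonempty proper subsets of `{1,2,3}`. -/
noncomputable def pureC3 (φ : Fin d1 × Fin d2 × Fin d3 → ℂ) : ℝ :=
  (2 : ℝ) ^ ((1 : ℝ) - (3 : ℝ) / 2) *
    Real.sqrt (((2 : ℝ) ^ (3 : ℕ) - 2) -
      (tr1sq (outer φ) + tr2sq (outer φ) + tr3sq (outer φ) +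
        tr12sq (outer φ) + tr13sq (outer φ) + tr23sq (outer φ)).re)

open scoped ComplexConjugate

theorem sum_comm_pairs {α β γ δ M : Type*} [AddCommMonoid M] {s : Finset α} {t : Finset β}
    {u : Finset γ} {v : Finset δ} (f : α → β → γ → δ → M) :
    ∑ a ∈ s, ∑ b ∈ t, ∑ c ∈ u, ∑ d ∈ v, f a b c d =
      ∑ c ∈ u, ∑ d ∈ v, ∑ a ∈ s, ∑ b ∈ t, f a b c d := by
  rw [Finset.sum_comm_cycle]
  exact Finset.sum_congr rfl fun _ _ => Finset.sum_comm_cycle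

section Bipartite

variable {ι κ : Type*} [Fintype ι] [Fintype κ]

/- `tr ρ_A²` and `tr ρ_B²` for the unnormalized bipartite vector `∑ b x u |x⟩|u⟩`. -/
def purityLeft (b : ι → κ → ℂ) : ℂ :=
  ∑ x, ∑ y, (∑ u, b x u * conj (b y u)) * (∑ u, b y u * conj (b x u))

def purityRight (b : ι → κ → ℂ) : ℂ :=
  ∑ u, ∑ v, (∑ x, b x u * conj (b x v)) * (∑ x, b x v * conj (b x u))

theorem sum_norm_sq_sub_swap (b : ι → κ → ℂ) :
    ∑ x, ∑ y, ∑ u, ∑ v, (‖b x u * b y v - b x v * b y u‖ ^ 2 : ℂ) =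
      2 * (∑ x, ∑ u, (‖b x u‖ ^ 2 : ℂ)) ^ 2 - purityLeft b - purityRight b := by
  have expand : ∀ x y u v, (‖b x u * b y v - b x v * b y u‖ ^ 2 : ℂ) =
      ‖b x u‖ ^ 2 * ‖b y v‖ ^ 2 + ‖b x v‖ ^ 2 * ‖b y u‖ ^ 2
        - b x v * conj (b y v) * (b y u * conj (b x u))
        - b x u * conj (b x v) * (b y v * conj (b y u)) := by
    intro x y u v
    simp only [← Complex.mul_conj', map_sub, map_mul]
    ring
  have norms : ∑ x, ∑ y, ∑ u, ∑ v, (‖b x u‖ ^ 2 * ‖b y v‖ ^ 2 : ℂ) =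
      (∑ x, ∑ u, (‖b x u‖ ^ 2 : ℂ)) ^ 2 := by
    simp_rw [sq (∑ x, _), Finset.sum_mul_sum]
  have norms_swap : ∑ x, ∑ y, ∑ u, ∑ v, (‖b x v‖ ^ 2 * ‖b y u‖ ^ 2 : ℂ) =
      (∑ x, ∑ u, (‖b x u‖ ^ 2 : ℂ)) ^ 2 := by
    rw [← norms]
    exact Finset.sum_congr rfl fun _ _ => Finset.sum_congr rfl fun _ _ => Finset.sum_comm
  have left : ∑ x, ∑ y, ∑ u, ∑ v, b x v * conj (b y v) * (b y u * conj (b x u)) =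
      purityLeft b := by
    simp_rw [purityLeft, Finset.sum_mul_sum]
    exact Finset.sum_congr rfl fun _ _ => Finset.sum_congr rfl fun _ _ => Finset.sum_comm
  have right : ∑ x, ∑ y, ∑ u, ∑ v, b x u * conj (b x v) * (b y v * conj (b y u)) =
      purityRight b := by
    simp_rw [purityRight, Finset.sum_mul_sum]
    exact sum_comm_pairs _
  simp only [expand, Finset.sum_add_distrib, Finset.sum_sub_distrib, norms, norms_swap, left,
    right]
  ring

end Bipartite

theorem tr1sq_outer (a : Fin d1 × Fin d2 × Fin d3 → ℂ) :
    tr1sq (outer a) = purityLeft fun i (x : Fin d2 × Fin d3) => a (i, x) := by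
  simp only [tr1sq, purityLeft, outer, Matrix.of_apply, Fintype.sum_prod_type]

theorem tr23sq_outer (a : Fin d1 × Fin d2 × Fin d3 → ℂ) :
    tr23sq (outer a) = purityRight fun i (x : Fin d2 × Fin d3) => a (i, x) := by
  simp only [tr23sq, purityRight, outer, Matrix.of_apply, Fintype.sum_prod_type]
  exact Finset.sum_congr rfl fun _ _ => Finset.sum_comm

theorem tr12sq_outer (a : Fin d1 × Fin d2 × Fin d3 → ℂ) :
    tr12sq (outer a) = purityLeft fun (x : Fin d1 × Fin d2) k => a (x.1, x.2, k) := by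
  simp only [tr12sq, purityLeft, outer, Matrix.of_apply, Fintype.sum_prod_type]
  exact Finset.sum_congr rfl fun _ _ => Finset.sum_comm

theorem tr3sq_outer (a : Fin d1 × Fin d2 × Fin d3 → ℂ) :
    tr3sq (outer a) = purityRight fun (x : Fin d1 × Fin d2) k => a (x.1, x.2, k) := by
  simp only [tr3sq, purityRight, outer, Matrix.of_apply, Fintype.sum_prod_type]

theorem tr13sq_outer (a : Fin d1 × Fin d2 × Fin d3 → ℂ) :
    tr13sq (outer a) = purityLeft fun (x : Fin d1 × Fin d3) j => a (x.1, j, x.2) := by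
  simp only [tr13sq, purityLeft, outer, Matrix.of_apply, Fintype.sum_prod_type]
  exact Finset.sum_congr rfl fun _ _ => Finset.sum_comm

theorem tr2sq_outer (a : Fin d1 × Fin d2 × Fin d3 → ℂ) :
    tr2sq (outer a) = purityRight fun (x : Fin d1 × Fin d3) j => a (x.1, j, x.2) := by
  simp only [tr2sq, purityRight, outer, Matrix.of_apply, Fintype.sum_prod_type]

theorem sum_norm_sq_swap_third (a : Fin d1 × Fin d2 × Fin d3 → ℂ) :
    ∑ i, ∑ p, ∑ j, ∑ q, ∑ k, ∑ t,
        (‖a (i, j, k) * a (p, q, t) - a (i, j, t) * a (p, q, k)‖ ^ 2 : ℂ) =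
      2 * (∑ x, (‖a x‖ ^ 2 : ℂ)) ^ 2 - tr12sq (outer a) - tr3sq (outer a) := by
  rw [tr12sq_outer, tr3sq_outer]
  convert sum_norm_sq_sub_swap (fun (x : Fin d1 × Fin d2) k => a (x.1, x.2, k)) using 1 <;>
    simp only [Fintype.sum_prod_type]
  exact Finset.sum_congr rfl fun _ _ => Finset.sum_comm

theorem sum_norm_sq_swap_second (a : Fin d1 × Fin d2 × Fin d3 → ℂ) :
    ∑ i, ∑ p, ∑ j, ∑ q, ∑ k, ∑ t,
        (‖a (i, j, k) * a (p, q, t) - a (i, q, k) * a (p, j, t)‖ ^ 2 : ℂ) =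
      2 * (∑ x, (‖a x‖ ^ 2 : ℂ)) ^ 2 - tr13sq (outer a) - tr2sq (outer a) := by
  rw [tr13sq_outer, tr2sq_outer]
  convert sum_norm_sq_sub_swap (fun (x : Fin d1 × Fin d3) j => a (x.1, j, x.2)) using 1 <;>
    simp only [Fintype.sum_prod_type]
  · exact Finset.sum_congr rfl fun _ _ =>
      (Finset.sum_comm.trans (Finset.sum_congr rfl fun _ _ => sum_comm_pairs _)).symm
  · rw [Finset.sum_congr rfl fun _ _ => Finset.sum_comm]

theorem sum_norm_sq_swap_first (a : Fin d1 × Fin d2 × Fin d3 → ℂ) :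
    ∑ i, ∑ p, ∑ j, ∑ q, ∑ k, ∑ t,
        (‖a (i, j, k) * a (p, q, t) - a (p, j, k) * a (i, q, t)‖ ^ 2 : ℂ) =
      2 * (∑ x, (‖a x‖ ^ 2 : ℂ)) ^ 2 - tr1sq (outer a) - tr23sq (outer a) := by
  rw [tr1sq_outer, tr23sq_outer]
  convert sum_norm_sq_sub_swap (fun i (x : Fin d2 × Fin d3) => a (i, x)) using 1 <;>
    simp only [Fintype.sum_prod_type]
  refine Finset.sum_congr rfl fun i _ => Finset.sum_congr rfl fun p _ =>
    Finset.sum_congr rfl fun j _ => ?_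
  rw [Finset.sum_comm]
  simp only [mul_comm (a (p, _)) (a (i, _))]

theorem pureC3_sq_eq (φ : Fin d1 × Fin d2 × Fin d3 → ℂ) {T : ℝ} (hT : 0 ≤ T)
    (h : (T : ℂ) = 6 - (tr1sq (outer φ) + tr2sq (outer φ) + tr3sq (outer φ) +
      tr12sq (outer φ) + tr13sq (outer φ) + tr23sq (outer φ))) :
    pureC3 φ ^ 2 = 1 / 2 * T := by
  have hre := congrArg Complex.re h
  simp only [Complex.ofReal_re, Complex.sub_re, Complex.re_ofNat] at hre
  rw [pureC3, mul_pow, show (2 : ℝ) ^ 3 - 2 = 6 by norm_num, ← hre, Real.sq_sqrt hT,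
    ← Real.rpow_natCast, ← Real.rpow_mul zero_le_two]
  norm_num

/-- for a unit vector `|phi> = sum a_{ijk}|ijk>` in
`C^{d1} (x) C^{d2} (x) C^{d3}`, the squared tripartite concurrence equals the
coefficient formula. -/
theorem stmt_5 (a : Fin d1 × Fin d2 × Fin d3 → ℂ)
    (ha : ∑ x, Complex.normSq (a x) = 1) :
    (pureC3 a) ^ 2 =
      (1 / 2) * ∑ i, ∑ p, ∑ j, ∑ q, ∑ k, ∑ t,
        (‖a (i, j, k) * a (p, q, t) - a (i, j, t) * a (p, q, k)‖ ^ 2 +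
         ‖a (i, j, k) * a (p, q, t) - a (i, q, k) * a (p, j, t)‖ ^ 2 +
         ‖a (i, j, k) * a (p, q, t) - a (p, j, k) * a (i, q, t)‖ ^ 2) := by
  have hnorm : ∑ x, (‖a x‖ ^ 2 : ℂ) = 1 := by
    simp only [← Complex.ofReal_pow, Complex.sq_norm, ← Complex.ofReal_sum, ha,
      Complex.ofReal_one]
  apply pureC3_sq_eq a (by positivity)
  push_cast
  simp only [Finset.sum_add_distrib, sum_norm_sq_swap_third, sum_norm_sq_swap_second,
    sum_norm_sq_swap_first, hnorm]
  ring

end Stmt5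
end

section
/- Let |φ⟩ = Σ a_{ijkr}|ijkr⟩ be a unit vector in ℂ^{d1}⊗ℂ^{d2}⊗ℂ^{d3}⊗ℂ^{d4} with Σ|a_{ijkr}|² = 1, and let ρ_α denote the reduced density matrices of |φ⟩⟨φ|. Then the following seven identities hold, where all sums run over i,p = 1..d1, j,q = 1..d2, k,t = 1..d3, r,h = 1..d4: 1 − tr(ρ_1²) = (1/2) Σ |a_{ijkr}a_{pqth} − a_{pjkr}a_{iqth}|²; 1 − tr(ρ_2²) = (1/2) Σ |a_{ijkr}a_{pqth} − a_{iqkr}a_{pjth}|²; 1 − tr(ρ_3²) = (1/2) Σ |a_{ijkr}a_{pqth} − a_{ijtr}a_{pqkh}|²; 1 − tr(ρ_4²) = (1/2) Σ |a_{ijkr}a_{pqth} − a_{ijkh}a_{pqtr}|²; 1 − tr(ρ_{12}²) = (1/2) Σ |a_{ijkr}a_{pqth} − a_{ijth}a_{pqkr}|²; 1 − tr(ρ_{13}²) = (1/2) Σ |a_{ijkr}a_{pqth} − a_{pjtr}a_{iqkh}|²; 1 − tr(ρ_{14}²) = (1/2) Σ |a_{ijkr}a_{pqth} − a_{pjkh}a_{iqtr}|².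 -/
open scoped BigOperators

namespace Stmt12

/-- The (unnormalized) projector `|v⟩⟨v|` associated to a vector `v`. -/
noncomputable def outer {I : Type*} (v : I → ℂ) : Matrix I I ℂ :=
  Matrix.of fun x y => v x * (starRingEnd ℂ) (v y)

variable {d1 d2 d3 d4 : ℕ}

/-- `tr(ρ_α²)` for `α = {1}`. -/
noncomputable def t1sq
    (ρ : Matrix (Fin d1 × Fin d2 × Fin d3 × Fin d4) (Fin d1 × Fin d2 × Fin d3 × Fin d4) ℂ) : ℂ :=
  ∑ i, ∑ p, (∑ j, ∑ k, ∑ r, ρ (i, j, k, r) (p, j, k, r)) * (∑ j, ∑ k, ∑ r, ρ (p, j, k, r) (i, j, k, r))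

/-- `tr(ρ_α²)` for `α = {2}`. -/
noncomputable def t2sq
    (ρ : Matrix (Fin d1 × Fin d2 × Fin d3 × Fin d4) (Fin d1 × Fin d2 × Fin d3 × Fin d4) ℂ) : ℂ :=
  ∑ j, ∑ q, (∑ i, ∑ k, ∑ r, ρ (i, j, k, r) (i, q, k, r)) * (∑ i, ∑ k, ∑ r, ρ (i, q, k, r) (i, j, k, r))

/-- `tr(ρ_α²)` for `α = {3}`. -/
noncomputable def t3sq
    (ρ : Matrix (Fin d1 × Fin d2 × Fin d3 × Fin d4) (Fin d1 × Fin d2 × Fin d3 × Fin d4) ℂ) : ℂ :=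
  ∑ k, ∑ t, (∑ i, ∑ j, ∑ r, ρ (i, j, k, r) (i, j, t, r)) * (∑ i, ∑ j, ∑ r, ρ (i, j, t, r) (i, j, k, r))

/-- `tr(ρ_α²)` for `α = {4}`. -/
noncomputable def t4sq
    (ρ : Matrix (Fin d1 × Fin d2 × Fin d3 × Fin d4) (Fin d1 × Fin d2 × Fin d3 × Fin d4) ℂ) : ℂ :=
  ∑ r, ∑ h, (∑ i, ∑ j, ∑ k, ρ (i, j, k, r) (i, j, k, h)) * (∑ i, ∑ j, ∑ k, ρ (i, j, k, h) (i, j, k, r))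

/-- `tr(ρ_α²)` for `α = {1,2}`. -/
noncomputable def t12sq
    (ρ : Matrix (Fin d1 × Fin d2 × Fin d3 × Fin d4) (Fin d1 × Fin d2 × Fin d3 × Fin d4) ℂ) : ℂ :=
  ∑ i, ∑ p, ∑ j, ∑ q, (∑ k, ∑ r, ρ (i, j, k, r) (p, q, k, r)) * (∑ k, ∑ r, ρ (p, q, k, r) (i, j, k, r))

/-- `tr(ρ_α²)` for `α = {1,3}`. -/
noncomputable def t13sq
    (ρ : Matrix (Fin d1 × Fin d2 × Fin d3 × Fin d4) (Fin d1 × Fin d2 × Fin d3 × Fin d4) ℂ) : ℂ :=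
  ∑ i, ∑ p, ∑ k, ∑ t, (∑ j, ∑ r, ρ (i, j, k, r) (p, j, t, r)) * (∑ j, ∑ r, ρ (p, j, t, r) (i, j, k, r))

/-- `tr(ρ_α²)` for `α = {1,4}`. -/
noncomputable def t14sq
    (ρ : Matrix (Fin d1 × Fin d2 × Fin d3 × Fin d4) (Fin d1 × Fin d2 × Fin d3 × Fin d4) ℂ) : ℂ :=
  ∑ i, ∑ p, ∑ r, ∑ h, (∑ j, ∑ k, ρ (i, j, k, r) (p, j, k, h)) * (∑ j, ∑ k, ρ (p, j, k, h) (i, j, k, r))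

/-- `tr(ρ_α²)` for `α = {2,3}`. -/
noncomputable def t23sq
    (ρ : Matrix (Fin d1 × Fin d2 × Fin d3 × Fin d4) (Fin d1 × Fin d2 × Fin d3 × Fin d4) ℂ) : ℂ :=
  ∑ j, ∑ q, ∑ k, ∑ t, (∑ i, ∑ r, ρ (i, j, k, r) (i, q, t, r)) * (∑ i, ∑ r, ρ (i, q, t, r) (i, j, k, r))

/-- `tr(ρ_α²)` for `α = {2,4}`. -/
noncomputable def t24sq
    (ρ : Matrix (Fin d1 × Fin d2 × Fin d3 × Fin d4) (Fin d1 × Fin d2 × Fin d3 × Fin d4) ℂ) : ℂ :=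
  ∑ j, ∑ q, ∑ r, ∑ h, (∑ i, ∑ k, ρ (i, j, k, r) (i, q, k, h)) * (∑ i, ∑ k, ρ (i, q, k, h) (i, j, k, r))

/-- `tr(ρ_α²)` for `α = {3,4}`. -/
noncomputable def t34sq
    (ρ : Matrix (Fin d1 × Fin d2 × Fin d3 × Fin d4) (Fin d1 × Fin d2 × Fin d3 × Fin d4) ℂ) : ℂ :=
  ∑ k, ∑ t, ∑ r, ∑ h, (∑ i, ∑ j, ρ (i, j, k, r) (i, j, t, h)) * (∑ i, ∑ j, ρ (i, j, t, h) (i, j, k, r))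

/-- `tr(ρ_α²)` for `α = {1,2,3}`. -/
noncomputable def t123sq
    (ρ : Matrix (Fin d1 × Fin d2 × Fin d3 × Fin d4) (Fin d1 × Fin d2 × Fin d3 × Fin d4) ℂ) : ℂ :=
  ∑ i, ∑ p, ∑ j, ∑ q, ∑ k, ∑ t, (∑ r, ρ (i, j, k, r) (p, q, t, r)) * (∑ r, ρ (p, q, t, r) (i, j, k, r))

/-- `tr(ρ_α²)` for `α = {1,2,4}`. -/
noncomputable def t124sq
    (ρ : Matrix (Fin d1 × Fin d2 × Fin d3 × Fin d4) (Fin d1 × Fin d2 × Fin d3 × Fin d4) ℂ) : ℂ :=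
  ∑ i, ∑ p, ∑ j, ∑ q, ∑ r, ∑ h, (∑ k, ρ (i, j, k, r) (p, q, k, h)) * (∑ k, ρ (p, q, k, h) (i, j, k, r))

/-- `tr(ρ_α²)` for `α = {1,3,4}`. -/
noncomputable def t134sq
    (ρ : Matrix (Fin d1 × Fin d2 × Fin d3 × Fin d4) (Fin d1 × Fin d2 × Fin d3 × Fin d4) ℂ) : ℂ :=
  ∑ i, ∑ p, ∑ k, ∑ t, ∑ r, ∑ h, (∑ j, ρ (i, j, k, r) (p, j, t, h)) * (∑ j, ρ (p, j, t, h) (i, j, k, r))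

/-- `tr(ρ_α²)` for `α = {2,3,4}`. -/
noncomputable def t234sq
    (ρ : Matrix (Fin d1 × Fin d2 × Fin d3 × Fin d4) (Fin d1 × Fin d2 × Fin d3 × Fin d4) ℂ) : ℂ :=
  ∑ j, ∑ q, ∑ k, ∑ t, ∑ r, ∑ h, (∑ i, ρ (i, j, k, r) (i, q, t, h)) * (∑ i, ρ (i, q, t, h) (i, j, k, r))

/-- Four-partite pure-state concurrence
`C₄(|φ⟩) = 2^{1−4/2} √((2⁴−2) − Σ_α tr(ρ_α²))`, where `α` runs over the
fourteen nonempty proper subsets of `{1,2,3,4}`. -/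
noncomputable def pureC4 (φ : Fin d1 × Fin d2 × Fin d3 × Fin d4 → ℂ) : ℝ :=
  (2 : ℝ) ^ ((1 : ℝ) - (4 : ℝ) / 2) *
    Real.sqrt (((2 : ℝ) ^ (4 : ℕ) - 2) -
      (t1sq (outer φ) +
        t2sq (outer φ) +
        t3sq (outer φ) +
        t4sq (outer φ) +
        t12sq (outer φ) +
        t13sq (outer φ) +
        t14sq (outer φ) +
        t23sq (outer φ) +
        t24sq (outer φ) +
        t34sq (outer φ) +
        t123sq (outer φ) +
        t124sq (outer φ) +
        t134sq (outer φ) +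
        t234sq (outer φ)).re)

/-!
Cut `|φ⟩` along `α | ᾱ` and view it as a matrix `v (x, y)` with `x` indexing the factors in `α`.
Expanding the partial trace gives `tr ρ_α² = ∑ v z₁ v z₂ conj (v z₁' v z₂')`, where `z₁', z₂'` arise
from `z₁, z₂` by exchanging their `α`-components. This exchange `σ` is a permutation of the index
set of the unit vector `F = v ⊗ v`, so `F ∘ σ` is a unit vector too, and
`1 - Re ⟨F, F ∘ σ⟩ = ½ ‖F - F ∘ σ‖²` is the required identity.
-/

open Finset Matrix ComplexConjugate

lemma one_sub_re_sum_mul_conj_perm {ι : Type*} [Fintype ι] (F : ι → ℂ)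
    (hF : ∑ x, Complex.normSq (F x) = 1) (σ : Equiv.Perm ι) :
    1 - (∑ x, F x * conj (F (σ x))).re = 1 / 2 * ∑ x, ‖F x - F (σ x)‖ ^ 2 := by
  have hFσ : ∑ x, Complex.normSq (F (σ x)) = 1 := (Equiv.sum_comp σ _).trans hF
  simp only [Complex.sq_norm, Complex.normSq_sub, sum_sub_distrib, sum_add_distrib, hF, hFσ,
    ← mul_sum, Complex.re_sum]
  ring

lemma sum_normSq_mul_eq_sq {ι : Type*} [Fintype ι] (v : ι → ℂ) :
    ∑ z : ι × ι, Complex.normSq (v z.1 * v z.2) = (∑ x, Complex.normSq (v x)) ^ 2 := by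
  simp only [Complex.normSq_mul, Fintype.sum_prod_type' (f := fun x y =>
    Complex.normSq (v x) * Complex.normSq (v y)), ← sum_mul_sum, sq]

lemma sum_sum_prod_eq_sum_sum_sum_sum {α β M : Type*} [Fintype α] [Fintype β] [AddCommMonoid M]
    (f : α × β → α × β → M) :
    ∑ x, ∑ y, f x y = ∑ a, ∑ a', ∑ b, ∑ b', f (a, b) (a', b') := by
  simp only [Fintype.sum_prod_type]
  exact sum_congr rfl fun _ _ => sum_comm

section Bipartite

variable {A B : Type*} [Fintype A] [Fintype B]

def partialTraceRight (ρ : Matrix (A × B) (A × B) ℂ) : Matrix A A ℂ :=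
  Matrix.of fun a a' => ∑ b, ρ (a, b) (a', b)

def swapFst : Equiv.Perm ((A × B) × (A × B)) where
  toFun z := ((z.2.1, z.1.2), (z.1.1, z.2.2))
  invFun z := ((z.2.1, z.1.2), (z.1.1, z.2.2))
  left_inv _ := rfl
  right_inv _ := rfl

lemma trace_partialTraceRight_outer_mul_self (v : A × B → ℂ) :
    (partialTraceRight (outer v) * partialTraceRight (outer v)).trace =
      ∑ z, v z.1 * v z.2 * conj (v (swapFst z).1 * v (swapFst z).2) := by
  simp only [trace, Matrix.diag, mul_apply, partialTraceRight, outer, of_apply, sum_mul_sum,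
    Fintype.sum_prod_type, map_mul]
  refine sum_congr rfl fun a _ => sum_comm.trans <| sum_congr rfl fun b _ => ?_
  refine sum_congr rfl fun a' _ => sum_congr rfl fun b' _ => ?_
  simp only [swapFst, Equiv.coe_fn_mk]
  ring

theorem one_sub_re_trace_partialTraceRight_outer_mul_self (v : A × B → ℂ)
    (hv : ∑ x, Complex.normSq (v x) = 1) :
    1 - (partialTraceRight (outer v) * partialTraceRight (outer v)).trace.re =
      1 / 2 * ∑ x, ∑ y, ‖v x * v y - v (y.1, x.2) * v (x.1, y.2)‖ ^ 2 := by
  rw [trace_partialTraceRight_outer_mul_self,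
    one_sub_re_sum_mul_conj_perm _ (by rw [sum_normSq_mul_eq_sq, hv, one_pow]),
    ← Fintype.sum_prod_type']
  rfl

end Bipartite

section Regrouping

variable {A B I : Type*} [Fintype A] [Fintype B]

/-- `ρ_A` for the pure state `a`, where `e` regroups the tensor factors of `I` into the
cut `A | B`. -/
noncomputable def reducedDensity (e : A × B ≃ I) (a : I → ℂ) : Matrix A A ℂ :=
  partialTraceRight (outer (a ∘ e))

lemma trace_reducedDensity_mul_self (e : A × B ≃ I) (a : I → ℂ) :
    (reducedDensity e a * reducedDensity e a).trace =
      ∑ x, ∑ x', (∑ y, a (e (x, y)) * conj (a (e (x', y)))) *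
        ∑ y, a (e (x', y)) * conj (a (e (x, y))) := by
  simp only [reducedDensity, partialTraceRight, outer, trace, Matrix.diag, mul_apply, of_apply,
    Function.comp_apply]

theorem one_sub_re_trace_reducedDensity_mul_self [Fintype I] (e : A × B ≃ I) (a : I → ℂ)
    (ha : ∑ x, Complex.normSq (a x) = 1) :
    1 - (reducedDensity e a * reducedDensity e a).trace.re =
      1 / 2 * ∑ x, ∑ y,
        ‖a x * a y - a (e ((e.symm y).1, (e.symm x).2)) * a (e ((e.symm x).1, (e.symm y).2))‖ ^ 2 := by
  rw [reducedDensity, one_sub_re_trace_partialTraceRight_outer_mul_self (a ∘ e)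
    ((e.sum_comp fun x => Complex.normSq (a x)).trans ha), ← e.sum_comp]
  refine congrArg _ (sum_congr rfl fun x _ => ?_)
  rw [← e.sum_comp]
  simp only [Function.comp_apply, Equiv.symm_apply_apply]

end Regrouping

section FourPartite

variable (a : Fin d1 × Fin d2 × Fin d3 × Fin d4 → ℂ)

lemma sum_sum_eq_sum_interleaved {M : Type*} [AddCommMonoid M]
    (f : Fin d1 × Fin d2 × Fin d3 × Fin d4 → Fin d1 × Fin d2 × Fin d3 × Fin d4 → M) :
    ∑ x, ∑ y, f x y = ∑ i, ∑ p, ∑ j, ∑ q, ∑ k, ∑ t, ∑ r, ∑ h, f (i, j, k, r) (p, q, t, h) := by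
  simp only [sum_sum_prod_eq_sum_sum_sum_sum]

def splitOff2 : Fin d2 × Fin d1 × Fin d3 × Fin d4 ≃ Fin d1 × Fin d2 × Fin d3 × Fin d4 where
  toFun := fun ⟨j, i, k, r⟩ => (i, j, k, r)
  invFun := fun ⟨i, j, k, r⟩ => (j, i, k, r)
  left_inv _ := rfl
  right_inv _ := rfl

def splitOff3 : Fin d3 × Fin d1 × Fin d2 × Fin d4 ≃ Fin d1 × Fin d2 × Fin d3 × Fin d4 where
  toFun := fun ⟨k, i, j, r⟩ => (i, j, k, r)
  invFun := fun ⟨i, j, k, r⟩ => (k, i, j, r)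
  left_inv _ := rfl
  right_inv _ := rfl

def splitOff4 : Fin d4 × Fin d1 × Fin d2 × Fin d3 ≃ Fin d1 × Fin d2 × Fin d3 × Fin d4 where
  toFun := fun ⟨r, i, j, k⟩ => (i, j, k, r)
  invFun := fun ⟨i, j, k, r⟩ => (r, i, j, k)
  left_inv _ := rfl
  right_inv _ := rfl

def splitOff13 : (Fin d1 × Fin d3) × Fin d2 × Fin d4 ≃ Fin d1 × Fin d2 × Fin d3 × Fin d4 where
  toFun := fun ⟨⟨i, k⟩, j, r⟩ => (i, j, k, r)
  invFun := fun ⟨i, j, k, r⟩ => ((i, k), j, r)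
  left_inv _ := rfl
  right_inv _ := rfl

def splitOff14 : (Fin d1 × Fin d4) × Fin d2 × Fin d3 ≃ Fin d1 × Fin d2 × Fin d3 × Fin d4 where
  toFun := fun ⟨⟨i, r⟩, j, k⟩ => (i, j, k, r)
  invFun := fun ⟨i, j, k, r⟩ => ((i, r), j, k)
  left_inv _ := rfl
  right_inv _ := rfl

lemma t1sq_outer :
    t1sq (outer a) = (reducedDensity (Equiv.refl _) a * reducedDensity (Equiv.refl _) a).trace := by
  simp only [t1sq, outer, of_apply, trace_reducedDensity_mul_self, Fintype.sum_prod_type]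
  rfl

lemma t2sq_outer :
    t2sq (outer a) = (reducedDensity splitOff2 a * reducedDensity splitOff2 a).trace := by
  simp only [t2sq, outer, of_apply, trace_reducedDensity_mul_self, Fintype.sum_prod_type]
  rfl

lemma t3sq_outer :
    t3sq (outer a) = (reducedDensity splitOff3 a * reducedDensity splitOff3 a).trace := by
  simp only [t3sq, outer, of_apply, trace_reducedDensity_mul_self, Fintype.sum_prod_type]
  rfl

lemma t4sq_outer :
    t4sq (outer a) = (reducedDensity splitOff4 a * reducedDensity splitOff4 a).trace := by
  simp only [t4sq, outer, of_apply, trace_reducedDensity_mul_self, Fintype.sum_prod_type]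
  rfl

lemma t12sq_outer : t12sq (outer a) =
    (reducedDensity (Equiv.prodAssoc _ _ _) a * reducedDensity (Equiv.prodAssoc _ _ _) a).trace := by
  simp only [t12sq, outer, of_apply, trace_reducedDensity_mul_self, Fintype.sum_prod_type]
  exact sum_congr rfl fun _ _ => sum_comm

lemma t13sq_outer :
    t13sq (outer a) = (reducedDensity splitOff13 a * reducedDensity splitOff13 a).trace := by
  simp only [t13sq, outer, of_apply, trace_reducedDensity_mul_self, Fintype.sum_prod_type]
  exact sum_congr rfl fun _ _ => sum_comm

lemma t14sq_outer :
    t14sq (outer a) = (reducedDensity splitOff14 a * reducedDensity splitOff14 a).trace := by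
  simp only [t14sq, outer, of_apply, trace_reducedDensity_mul_self, Fintype.sum_prod_type]
  exact sum_congr rfl fun _ _ => sum_comm

end FourPartite

/-- for a unit vector `|φ⟩ = Σ a_{ijkr}|ijkr⟩` in
`ℂ^{d1}⊗ℂ^{d2}⊗ℂ^{d3}⊗ℂ^{d4}`, the seven purity identities
`1 − tr(ρ_α²) = (1/2) Σ |a a − a a|²` hold for
`α = {1},{2},{3},{4},{1,2},{1,3},{1,4}`. -/
theorem stmt_12 (a : Fin d1 × Fin d2 × Fin d3 × Fin d4 → ℂ)
    (ha : ∑ x, Complex.normSq (a x) = 1) :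
    ((1 - (t1sq (outer a)).re =
      (1 / 2) * ∑ i, ∑ p, ∑ j, ∑ q, ∑ k, ∑ t, ∑ r, ∑ h,
        ‖a (i, j, k, r) * a (p, q, t, h) - a (p, j, k, r) * a (i, q, t, h)‖ ^ 2) ∧
    (1 - (t2sq (outer a)).re =
      (1 / 2) * ∑ i, ∑ p, ∑ j, ∑ q, ∑ k, ∑ t, ∑ r, ∑ h,
        ‖a (i, j, k, r) * a (p, q, t, h) - a (i, q, k, r) * a (p, j, t, h)‖ ^ 2) ∧
    (1 - (t3sq (outer a)).re =
      (1 / 2) * ∑ i, ∑ p, ∑ j, ∑ q, ∑ k, ∑ t, ∑ r, ∑ h,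
        ‖a (i, j, k, r) * a (p, q, t, h) - a (i, j, t, r) * a (p, q, k, h)‖ ^ 2) ∧
    (1 - (t4sq (outer a)).re =
      (1 / 2) * ∑ i, ∑ p, ∑ j, ∑ q, ∑ k, ∑ t, ∑ r, ∑ h,
        ‖a (i, j, k, r) * a (p, q, t, h) - a (i, j, k, h) * a (p, q, t, r)‖ ^ 2) ∧
    (1 - (t12sq (outer a)).re =
      (1 / 2) * ∑ i, ∑ p, ∑ j, ∑ q, ∑ k, ∑ t, ∑ r, ∑ h,
        ‖a (i, j, k, r) * a (p, q, t, h) - a (i, j, t, h) * a (p, q, k, r)‖ ^ 2) ∧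
    (1 - (t13sq (outer a)).re =
      (1 / 2) * ∑ i, ∑ p, ∑ j, ∑ q, ∑ k, ∑ t, ∑ r, ∑ h,
        ‖a (i, j, k, r) * a (p, q, t, h) - a (p, j, t, r) * a (i, q, k, h)‖ ^ 2) ∧
    (1 - (t14sq (outer a)).re =
      (1 / 2) * ∑ i, ∑ p, ∑ j, ∑ q, ∑ k, ∑ t, ∑ r, ∑ h,
        ‖a (i, j, k, r) * a (p, q, t, h) - a (p, j, k, h) * a (i, q, t, r)‖ ^ 2)) := by
  rw [t1sq_outer, t2sq_outer, t3sq_outer, t4sq_outer, t12sq_outer, t13sq_outer, t14sq_outer]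
  simp only [one_sub_re_trace_reducedDensity_mul_self _ a ha, sum_sum_eq_sum_interleaved]
  -- only for `α = {1,2}` do the two factors of the exchanged product come in the opposite order
  exact ⟨rfl, rfl, rfl, rfl, by ac_rfl, rfl, rfl⟩

end Stmt12
end
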